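/- arXiv:2007.09890 — 2 statements merged into one kernel-verified Lean document; each statement's English description precedes it below -/
import Mathlib

section
/- Let A ∈ ℝ^{n×d}, let k be a positive integer with k ≤ min(n,d), let A_k denote the best rank-k approximation of A, and let 0 ≤ ε < 1. If S ∈ ℝ^{m×n} is an affine ε-embedding for the pair (A_k, A), then min over matrices X ∈ ℝ^{n×m} of rank at most k of ‖X S A − A‖_F² ≤ ((1+ε)/(1−ε)) · ‖A_k − A‖_F². In particular, the row space of SA contains a rank-≤k approximation of A with error at most ((1+ε)/(1−ε))‖A_k − A‖_F². -/
/-!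
Choose a matrix `M` such that `S Aₖ M` is the orthogonal projection onto the column space of
`S Aₖ` (compose the projection with a linear right inverse of `S Aₖ` on its range). Projecting
the columns of `S A` solves the least-squares problem `min_X ‖S (Aₖ X - A)‖²`, so
`‖S (Aₖ M S A - A)‖² ≤ ‖S (Aₖ - A)‖²`, and the two sides of the affine embedding give
`(1 - ε) ‖Aₖ M S A - A‖² ≤ (1 + ε) ‖Aₖ - A‖²`. The witness `Aₖ M` has rank at most `k`,
and the rows of `Aₖ M S A` are combinations of the rows of `S A`.
-/

open Matrix

/-- Squared Frobenius norm of a real matrix. -/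
noncomputable def frobSq {m n : Type*} [Fintype m] [Fintype n] (M : Matrix m n ℝ) : ℝ :=
  ∑ i, ∑ j, (M i j) ^ 2

/-- Row space of a real matrix: the span of its rows. -/
def rowSpace {m n : Type*} (M : Matrix m n ℝ) : Submodule ℝ (n → ℝ) :=
  Submodule.span ℝ (Set.range fun i => M i)

theorem Submodule.norm_sub_starProjection_le {E : Type*} [NormedAddCommGroup E]
    [InnerProductSpace ℝ E] (U : Submodule ℝ E) [U.HasOrthogonalProjection] (y : E) {x : E}
    (hx : x ∈ U) : ‖U.starProjection y - y‖ ≤ ‖x - y‖ := by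
  rw [norm_sub_rev, norm_sub_rev x, starProjection_minimal]
  exact ciInf_le ⟨0, by rintro _ ⟨z, rfl⟩; positivity⟩ (⟨x, hx⟩ : U)

lemma rowSpace_mul_le {l m n : Type*} [Fintype m] (X : Matrix l m ℝ) (B : Matrix m n ℝ) :
    rowSpace (X * B) ≤ rowSpace B := by
  refine Submodule.span_le.2 ?_
  rintro _ ⟨i, rfl⟩
  have hrow : (X * B) i = ∑ j, X i j • B j := by
    ext; simp [Matrix.mul_apply, Finset.sum_apply]
  change (X * B) i ∈ rowSpace B
  rw [hrow]
  exact Submodule.sum_mem _ fun j _ => Submodule.smul_mem _ _ (Submodule.subset_span ⟨j, rfl⟩)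

section
variable {m n : Type*} [Fintype m] [Fintype n]

lemma frobSq_nonneg (M : Matrix m n ℝ) : 0 ≤ frobSq M := by
  unfold frobSq; positivity

lemma frobSq_eq_sum_norm_sq_col (M : Matrix m n ℝ) :
    frobSq M = ∑ j, ‖WithLp.toLp 2 (Mᵀ j)‖ ^ 2 := by
  simp only [frobSq, EuclideanSpace.real_norm_sq_eq]
  exact Finset.sum_comm

theorem Matrix.exists_norm_mulVec_mulVec_sub_le (C : Matrix m n ℝ) :
    ∃ M : Matrix n m ℝ, ∀ b x,
      ‖WithLp.toLp 2 (C *ᵥ (M *ᵥ b) - b)‖ ≤ ‖WithLp.toLp 2 (C *ᵥ x - b)‖ := by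
  classical
  let toE := (WithLp.linearEquiv 2 ℝ (m → ℝ)).symm
  let g : (n → ℝ) →ₗ[ℝ] EuclideanSpace ℝ m := toE.toLinearMap ∘ₗ C.mulVecLin
  let K := LinearMap.range g
  obtain ⟨L, hL⟩ := g.rangeRestrict.exists_rightInverse_of_surjective g.range_rangeRestrict
  let P := L ∘ₗ K.orthogonalProjectionOnto.toLinearMap ∘ₗ toE.toLinearMap
  refine ⟨LinearMap.toMatrix' P, fun b x => ?_⟩
  have hproj : C *ᵥ (LinearMap.toMatrix' P *ᵥ b) = WithLp.ofLp (K.starProjection (toE b)) := by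
    rw [LinearMap.toMatrix'_mulVec]
    exact congr(WithLp.ofLp ($(LinearMap.congr_fun hL (K.orthogonalProjectionOnto (toE b))) :
      EuclideanSpace ℝ m))
  rw [hproj, WithLp.toLp_sub, WithLp.toLp_sub, WithLp.toLp_ofLp]
  exact K.norm_sub_starProjection_le (toE b) (LinearMap.mem_range_self g x)

theorem Matrix.exists_frobSq_mul_mul_sub_le {r : Type*} [Fintype r] (C : Matrix m n ℝ) :
    ∃ M : Matrix n m ℝ, ∀ (B : Matrix m r ℝ) (X : Matrix n r ℝ),
      frobSq (C * (M * B) - B) ≤ frobSq (C * X - B) := by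
  obtain ⟨M, hM⟩ := C.exists_norm_mulVec_mulVec_sub_le
  refine ⟨M, fun B X => ?_⟩
  rw [frobSq_eq_sum_norm_sq_col, frobSq_eq_sum_norm_sq_col]
  exact Finset.sum_le_sum fun j _ => pow_le_pow_left₀ (norm_nonneg _) (hM (Bᵀ j) (Xᵀ j)) 2

end

theorem stmt3_general {n d m : ℕ} (k : ℕ)
    (A Ak : Matrix (Fin n) (Fin d) ℝ)
    (hAkrank : Ak.rank ≤ k)
    (ε : ℝ) (hε1 : ε < 1)
    (S : Matrix (Fin m) (Fin n) ℝ)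
    (hS : ∀ X : Matrix (Fin d) (Fin d) ℝ,
      (1 - ε) * frobSq (Ak * X - A) ≤ frobSq (S * (Ak * X - A)) ∧
        frobSq (S * (Ak * X - A)) ≤ (1 + ε) * frobSq (Ak * X - A)) :
    (⨅ X : {X : Matrix (Fin n) (Fin m) ℝ // X.rank ≤ k},
        frobSq (X.1 * (S * A) - A)) ≤ ((1 + ε) / (1 - ε)) * frobSq (Ak - A)
    ∧ ∃ Y : Matrix (Fin n) (Fin d) ℝ, Y.rank ≤ k ∧ rowSpace Y ≤ rowSpace (S * A) ∧
        frobSq (Y - A) ≤ ((1 + ε) / (1 - ε)) * frobSq (Ak - A) := by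
  obtain ⟨M, hM⟩ := (S * Ak).exists_frobSq_mul_mul_sub_le (r := Fin d)
  have hsketch : frobSq (S * (Ak * (M * (S * A)) - A)) ≤ frobSq (S * (Ak - A)) := by
    simpa only [Matrix.mul_sub, Matrix.mul_assoc, Matrix.mul_one] using hM (S * A) 1
  have hbound : frobSq (Ak * M * (S * A) - A) ≤ ((1 + ε) / (1 - ε)) * frobSq (Ak - A) := by
    have hchain : (1 - ε) * frobSq (Ak * M * (S * A) - A) ≤ (1 + ε) * frobSq (Ak - A) :=
      calc (1 - ε) * frobSq (Ak * M * (S * A) - A)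
          = (1 - ε) * frobSq (Ak * (M * (S * A)) - A) := by rw [Matrix.mul_assoc]
        _ ≤ frobSq (S * (Ak * (M * (S * A)) - A)) := (hS _).1
        _ ≤ frobSq (S * (Ak - A)) := hsketch
        _ ≤ (1 + ε) * frobSq (Ak - A) := by simpa only [Matrix.mul_one] using (hS 1).2
    rw [div_mul_eq_mul_div, le_div_iff₀ (by linarith)]
    linarith
  have hrank : (Ak * M).rank ≤ k := (Matrix.rank_mul_le_left _ _).trans hAkrank
  refine ⟨ciInf_le_of_le ⟨0, ?_⟩ ⟨Ak * M, hrank⟩ hbound, Ak * M * (S * A),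
    (Matrix.rank_mul_le_left _ _).trans hrank, rowSpace_mul_le _ _, hbound⟩
  rintro _ ⟨X, rfl⟩
  exact frobSq_nonneg _

theorem stmt3 {n d m : ℕ} (k : ℕ) (hk : 0 < k) (hkn : k ≤ min n d)
    (A Ak : Matrix (Fin n) (Fin d) ℝ)
    (hAkrank : Ak.rank ≤ k)
    (hAkbest : ∀ X : Matrix (Fin n) (Fin d) ℝ, X.rank ≤ k → frobSq (A - Ak) ≤ frobSq (A - X))
    (ε : ℝ) (hε0 : 0 ≤ ε) (hε1 : ε < 1)
    (S : Matrix (Fin m) (Fin n) ℝ)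
    (hS : ∀ X : Matrix (Fin d) (Fin d) ℝ,
      (1 - ε) * frobSq (Ak * X - A) ≤ frobSq (S * (Ak * X - A)) ∧
        frobSq (S * (Ak * X - A)) ≤ (1 + ε) * frobSq (Ak * X - A)) :
    (⨅ X : {X : Matrix (Fin n) (Fin m) ℝ // X.rank ≤ k},
        frobSq (X.1 * (S * A) - A)) ≤ ((1 + ε) / (1 - ε)) * frobSq (Ak - A)
    ∧ ∃ Y : Matrix (Fin n) (Fin d) ℝ, Y.rank ≤ k ∧ rowSpace Y ≤ rowSpace (S * A) ∧
        frobSq (Y - A) ≤ ((1 + ε) / (1 - ε)) * frobSq (Ak - A) :=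
  stmt3_general k A Ak hAkrank ε hε1 S hS
end

section
/- Let v_1,…,v_c, u ∈ ℝ^d be pairwise orthogonal nonzero vectors, let g_0, g_1,…,g_c ∈ {−1,1}, and set W = ∑_{j=1}^c ‖v_j‖² and Q = ∑_{j=1}^c ‖v_j‖⁴. Then: (a) the sum of squared norms of the orthogonal projections of v_1,…,v_c, u onto the line spanned by g_0·u + ∑_{j=1}^c g_j v_j equals (Q + ‖u‖⁴)/(W + ‖u‖²); and (b) Q/W − (Q + ‖u‖⁴)/(W + ‖u‖²) = ‖u‖²·(Q/W − ‖u‖²)/(W + ‖u‖²) ≤ ‖u‖²·(W − ‖u‖²)/(W + ‖u‖²). In other words, merging u into a bin of orthogonal vectors v_1,…,v_c increases the total squared projection loss by exactly ‖u‖²·(Q/W − ‖u‖²)/(W + ‖u‖²), which is at most ‖u‖²·(W − ‖u‖²)/(W + ‖u‖²). -/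
open scoped RealInnerProductSpace

/-!
For pairwise orthogonal `x i` and signs `s i`, the vector `w = ∑ s i • x i` satisfies
`⟪w, x i⟫ = s i ‖x i‖²` and `‖w‖² = ∑ ‖x i‖²`, so projecting onto `ℝ ∙ w` gives
`∑ ‖π (x i)‖² = ∑ ‖x i‖⁴ / ∑ ‖x i‖²`; applied to the family `v` with `u` adjoined this is (a).
Part (b) is then algebra, the inequality coming from `Q ≤ W²`.
-/

section SignedSumLine

variable {E : Type*} [NormedAddCommGroup E] [InnerProductSpace ℝ E]

theorem norm_sq_starProjection_span_singleton (w x : E) :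
    ‖(ℝ ∙ w).starProjection x‖ ^ 2 = ⟪w, x⟫ ^ 2 / ‖w‖ ^ 2 := by
  rw [Submodule.starProjection_singleton, RCLike.ofReal_real_eq_id, id, norm_smul,
    Real.norm_eq_abs, mul_pow, sq_abs]
  rcases eq_or_ne ‖w‖ 0 with hw | hw
  · simp [hw]
  · field_simp

variable {ι : Type*} [Fintype ι] {x : ι → E} {s : ι → ℝ}

theorem inner_sum_smul_of_pairwise_inner_eq_zero (hx : Pairwise fun i j ↦ ⟪x i, x j⟫ = 0)
    (i : ι) : ⟪∑ j, s j • x j, x i⟫ = s i * ‖x i‖ ^ 2 := by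
  classical
  rw [sum_inner, Finset.sum_eq_single i (fun j _ hji ↦ by rw [real_inner_smul_left, hx hji,
    mul_zero]) (by simp), real_inner_smul_left, real_inner_self_eq_norm_sq]

theorem norm_sq_sum_smul_of_pairwise_inner_eq_zero (hx : Pairwise fun i j ↦ ⟪x i, x j⟫ = 0)
    (hs : ∀ i, s i ^ 2 = 1) : ‖∑ j, s j • x j‖ ^ 2 = ∑ j, ‖x j‖ ^ 2 := by
  rw [← real_inner_self_eq_norm_sq, sum_inner]
  refine Finset.sum_congr rfl fun j _ ↦ ?_
  rw [real_inner_smul_left, real_inner_comm, inner_sum_smul_of_pairwise_inner_eq_zero hx,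
    ← mul_assoc, ← sq, hs, one_mul]

theorem sum_norm_sq_starProjection_span_sum_smul (hx : Pairwise fun i j ↦ ⟪x i, x j⟫ = 0)
    (hs : ∀ i, s i ^ 2 = 1) :
    ∑ i, ‖(ℝ ∙ ∑ j, s j • x j).starProjection (x i)‖ ^ 2
      = (∑ i, ‖x i‖ ^ 4) / ∑ i, ‖x i‖ ^ 2 := by
  simp only [norm_sq_starProjection_span_singleton, inner_sum_smul_of_pairwise_inner_eq_zero hx,
    norm_sq_sum_smul_of_pairwise_inner_eq_zero hx hs, mul_pow, hs,
    one_mul, ← pow_mul, Finset.sum_div]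

end SignedSumLine

theorem div_sub_add_pow_four_div_add_sq {Q W : ℝ} (hW : 0 ≤ W) (hQ : 0 ≤ Q) (hQW : Q ≤ W ^ 2)
    (b : ℝ) :
    Q / W - (Q + b ^ 4) / (W + b ^ 2) = b ^ 2 * (Q / W - b ^ 2) / (W + b ^ 2) := by
  rcases hW.eq_or_lt with rfl | hW
  · obtain rfl : Q = 0 := by nlinarith
    rcases eq_or_ne b 0 with rfl | hb
    · simp
    · field_simp
      ring
  · field_simp
    ring

theorem sq_mul_div_sub_div_add_sq_le {Q W : ℝ} (hW : 0 ≤ W) (hQW : Q ≤ W ^ 2) (b : ℝ) :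
    b ^ 2 * (Q / W - b ^ 2) / (W + b ^ 2) ≤ b ^ 2 * (W - b ^ 2) / (W + b ^ 2) := by
  have : Q / W ≤ W := div_le_of_le_mul₀ hW hW (by rwa [← sq])
  gcongr


theorem stmt17_general {d c : ℕ}
    (v : Fin c → EuclideanSpace ℝ (Fin d)) (u : EuclideanSpace ℝ (Fin d))
    (horthv : ∀ i j : Fin c, i ≠ j → ⟪v i, v j⟫ = 0)
    (horthu : ∀ i, ⟪u, v i⟫ = 0)
    (g0 : ℝ) (hg0 : g0 = 1 ∨ g0 = -1)
    (g : Fin c → ℝ) (hg : ∀ i, g i = 1 ∨ g i = -1) :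
    let W := ∑ j, ‖v j‖ ^ 2
    let Q := ∑ j, ‖v j‖ ^ 4
    let L := Submodule.span ℝ
      ({g0 • u + ∑ j, g j • v j} : Set (EuclideanSpace ℝ (Fin d)))
    ((∑ j, ‖(L.orthogonalProjection (v j) : EuclideanSpace ℝ (Fin d))‖ ^ 2)
        + ‖(L.orthogonalProjection u : EuclideanSpace ℝ (Fin d))‖ ^ 2
        = (Q + ‖u‖ ^ 4) / (W + ‖u‖ ^ 2)) ∧
    (Q / W - (Q + ‖u‖ ^ 4) / (W + ‖u‖ ^ 2)
        = ‖u‖ ^ 2 * (Q / W - ‖u‖ ^ 2) / (W + ‖u‖ ^ 2)) ∧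
    (‖u‖ ^ 2 * (Q / W - ‖u‖ ^ 2) / (W + ‖u‖ ^ 2)
        ≤ ‖u‖ ^ 2 * (W - ‖u‖ ^ 2) / (W + ‖u‖ ^ 2)) := by
  intro W Q L
  have hW : 0 ≤ W := by positivity
  have hQW : Q ≤ W ^ 2 := by
    simpa only [Q, W, ← pow_mul] using
      Finset.sum_sq_le_sq_sum_of_nonneg (s := Finset.univ) fun j _ ↦ sq_nonneg ‖v j‖
  refine ⟨?_, div_sub_add_pow_four_div_add_sq hW (by positivity) hQW ‖u‖,
    sq_mul_div_sub_div_add_sq_le hW hQW ‖u‖⟩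
  -- adjoin `u` to the family `v` as the index `none`
  have horth : Pairwise fun i j : Option (Fin c) ↦ ⟪i.elim u v, j.elim u v⟫ = 0 := by
    rintro (_ | i) (_ | j) hij <;> simp_all [real_inner_comm]
  have hsign : ∀ i : Option (Fin c), i.elim g0 g ^ 2 = 1 := by
    rintro (_ | i) <;> [rcases hg0 with h | h; rcases hg i with h | h] <;> simp [h]
  have hloss := sum_norm_sq_starProjection_span_sum_smul horth hsign
  simp only [Fintype.sum_option, Option.elim] at hloss
  rw [add_comm, add_comm Q, add_comm W]
  exact hloss

theorem stmt17 {d c : ℕ}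
    (v : Fin c → EuclideanSpace ℝ (Fin d)) (u : EuclideanSpace ℝ (Fin d))
    (hv0 : ∀ i, v i ≠ 0) (hu0 : u ≠ 0)
    (horthv : ∀ i j : Fin c, i ≠ j → ⟪v i, v j⟫ = 0)
    (horthu : ∀ i, ⟪u, v i⟫ = 0)
    (g0 : ℝ) (hg0 : g0 = 1 ∨ g0 = -1)
    (g : Fin c → ℝ) (hg : ∀ i, g i = 1 ∨ g i = -1) :
    let W := ∑ j, ‖v j‖ ^ 2
    let Q := ∑ j, ‖v j‖ ^ 4
    let L := Submodule.span ℝ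
      ({g0 • u + ∑ j, g j • v j} : Set (EuclideanSpace ℝ (Fin d)))
    ((∑ j, ‖(L.orthogonalProjection (v j) : EuclideanSpace ℝ (Fin d))‖ ^ 2)
        + ‖(L.orthogonalProjection u : EuclideanSpace ℝ (Fin d))‖ ^ 2
        = (Q + ‖u‖ ^ 4) / (W + ‖u‖ ^ 2)) ∧
    (Q / W - (Q + ‖u‖ ^ 4) / (W + ‖u‖ ^ 2)
        = ‖u‖ ^ 2 * (Q / W - ‖u‖ ^ 2) / (W + ‖u‖ ^ 2)) ∧
    (‖u‖ ^ 2 * (Q / W - ‖u‖ ^ 2) / (W + ‖u‖ ^ 2)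
        ≤ ‖u‖ ^ 2 * (W - ‖u‖ ^ 2) / (W + ‖u‖ ^ 2)) :=
  stmt17_general v u horthv horthu g0 hg0 g hg
end
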